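/- A Leibniz algebra g is quasi-Artinian if and only if there exists a two-sided ideal I of g such that the quotient g/I is solvable and the two sets of ideals {[H,I] : H a two-sided ideal of g} and {[I,H] : H a two-sided ideal of g} each satisfy the minimal condition (i.e., every descending chain of ideals whose terms lie in the set stabilizes). -/

import Mathlib

universe u v

/-- A (left) Leibniz algebra over a field `K`: a `K`-vector space with a bilinear
bracket satisfying the left Leibniz identity. -/
class LeibnizAlgebra (K : Type u) (g : Type v) [Field K] [AddCommGroup g] [Module K g]
    extends Bracket g g where
  add_bracket : ∀ x y z : g, ⁅x + y, z⁆ = ⁅x, z⁆ + ⁅y, z⁆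
  bracket_add : ∀ x y z : g, ⁅x, y + z⁆ = ⁅x, y⁆ + ⁅x, z⁆
  smul_bracket : ∀ (c : K) (x y : g), ⁅c • x, y⁆ = c • ⁅x, y⁆
  bracket_smul : ∀ (c : K) (x y : g), ⁅x, c • y⁆ = c • ⁅x, y⁆
  leibniz : ∀ x y z : g, ⁅x, ⁅y, z⁆⁆ = ⁅⁅x, y⁆, z⁆ + ⁅y, ⁅x, z⁆⁆

namespace Leibniz

section Defs

variable (K : Type u) (g : Type v) [Field K] [AddCommGroup g] [Module K g] [LeibnizAlgebra K g]

lemma zero_bracket (y : g) : ⁅(0 : g), y⁆ = 0 := by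
  have h := LeibnizAlgebra.smul_bracket (0 : K) (0 : g) y
  simpa using h

lemma bracket_zero (y : g) : ⁅y, (0 : g)⁆ = 0 := by
  have h := LeibnizAlgebra.bracket_smul (0 : K) y (0 : g)
  simpa using h

lemma neg_bracket (x y : g) : ⁅-x, y⁆ = -⁅x, y⁆ := by
  have h := LeibnizAlgebra.smul_bracket (-1 : K) x y
  simpa using h

lemma bracket_neg (x y : g) : ⁅x, -y⁆ = -⁅x, y⁆ := by
  have h := LeibnizAlgebra.bracket_smul (-1 : K) x y
  simpa using h

lemma sub_bracket (x x' y : g) : ⁅x - x', y⁆ = ⁅x, y⁆ - ⁅x', y⁆ := by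
  rw [sub_eq_add_neg, LeibnizAlgebra.add_bracket, neg_bracket K, ← sub_eq_add_neg]

lemma bracket_sub (x y y' : g) : ⁅x, y - y'⁆ = ⁅x, y⁆ - ⁅x, y'⁆ := by
  rw [sub_eq_add_neg, LeibnizAlgebra.bracket_add, bracket_neg K, ← sub_eq_add_neg]

/-- A (two-sided) ideal of a Leibniz algebra: a subspace `I` with `⁅g,I⁆ ⊆ I` and
`⁅I,g⁆ ⊆ I`. -/
def IsIdeal (I : Submodule K g) : Prop :=
  ∀ x : g, ∀ a ∈ I, ⁅x, a⁆ ∈ I ∧ ⁅a, x⁆ ∈ I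

/-- The bracket `[A, B]` of two subspaces: the span of all brackets `⁅a, b⁆`. -/
def bk (A B : Submodule K g) : Submodule K g :=
  Submodule.span K {z : g | ∃ a ∈ A, ∃ b ∈ B, z = ⁅a, b⁆}

/-- The derived series of a subspace `I`, computed in `g`:
`I^(0) = I`, `I^(n+1) = [I^(n), I^(n)]`. -/
def subDerived (I : Submodule K g) : ℕ → Submodule K g
  | 0 => I
  | n + 1 => bk K g (subDerived I n) (subDerived I n)

/-- The derived series of `g`: `g^(0) = g`, `g^(n+1) = [g^(n), g^(n)]`. -/
def derived : ℕ → Submodule K g := subDerived K g ⊤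

/-- A Leibniz algebra is solvable if `g^(n) = 0` for some `n`. -/
def IsSolvable : Prop := ∃ n : ℕ, derived K g n = ⊥

/-- A Leibniz algebra is abelian if its bracket is identically zero. -/
def IsAbelian : Prop := ∀ x y : g, ⁅x, y⁆ = 0

/-- A nonzero Leibniz algebra is simple if its only two-sided ideals are `⊥` and `⊤`. -/
def IsSimpleAlg : Prop :=
  (∃ x : g, x ≠ 0) ∧ ∀ I : Submodule K g, IsIdeal K g I → I = ⊥ ∨ I = ⊤

/-- A Leibniz algebra `g` is quasi-Artinian if for every descending chain of ideals
`I_1 ⊇ I_2 ⊇ ⋯` there is `m` with `[g^(m), I_m] ⊆ I_n` and `[I_m, g^(m)] ⊆ I_n` for all `n`. -/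
def QuasiArtinian : Prop :=
  ∀ I : ℕ → Submodule K g, (∀ n, IsIdeal K g (I n)) → (∀ n, I (n + 1) ≤ I n) →
    ∃ m : ℕ, ∀ n : ℕ,
      bk K g (derived K g m) (I m) ≤ I n ∧ bk K g (I m) (derived K g m) ≤ I n

/-- A Leibniz algebra is Artinian if every descending chain of two-sided ideals stabilizes. -/
def ArtinianAlg : Prop :=
  ∀ I : ℕ → Submodule K g, (∀ n, IsIdeal K g (I n)) → (∀ n, I (n + 1) ≤ I n) →
    ∃ m : ℕ, ∀ n : ℕ, m ≤ n → I n = I m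

/-- A solvable ideal: an ideal which is solvable (as a Leibniz algebra). -/
def IsSolvableIdeal (I : Submodule K g) : Prop :=
  IsIdeal K g I ∧ ∃ n : ℕ, subDerived K g I n = ⊥

/-- An abelian ideal: an ideal whose bracket vanishes identically. -/
def IsAbelianIdeal (I : Submodule K g) : Prop :=
  IsIdeal K g I ∧ ∀ x ∈ I, ∀ y ∈ I, ⁅x, y⁆ = (0 : g)

/-- Minimal condition on solvable ideals: every descending chain of solvable
two-sided ideals stabilizes. -/
def MinOnSolvableIdeals : Prop :=
  ∀ I : ℕ → Submodule K g, (∀ n, IsSolvableIdeal K g (I n)) → (∀ n, I (n + 1) ≤ I n) →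
    ∃ m : ℕ, ∀ n : ℕ, m ≤ n → I n = I m

/-- Minimal condition on abelian ideals: every descending chain of abelian
two-sided ideals stabilizes. -/
def MinOnAbelianIdeals : Prop :=
  ∀ I : ℕ → Submodule K g, (∀ n, IsAbelianIdeal K g (I n)) → (∀ n, I (n + 1) ≤ I n) →
    ∃ m : ℕ, ∀ n : ℕ, m ≤ n → I n = I m

/-- `I` is a two-sided ideal of the subalgebra `A` (both viewed as subspaces of `g`). -/
def IsIdealIn (A I : Submodule K g) : Prop :=
  I ≤ A ∧ ∀ x ∈ A, ∀ a ∈ I, ⁅x, a⁆ ∈ I ∧ ⁅a, x⁆ ∈ I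

/-- A prime ideal: a proper two-sided ideal `P` such that `[h₁, h₂] ⊆ P` for ideals
`h₁, h₂` forces `h₁ ⊆ P` or `h₂ ⊆ P`. -/
def IsPrimeIdeal (P : Submodule K g) : Prop :=
  IsIdeal K g P ∧ P ≠ ⊤ ∧
    ∀ h₁ h₂ : Submodule K g, IsIdeal K g h₁ → IsIdeal K g h₂ →
      bk K g h₁ h₂ ≤ P → h₁ ≤ P ∨ h₂ ≤ P

/-- `Leib(g)`: the subspace spanned by all squares `⁅x, x⁆`. -/
def leibIdeal : Submodule K g :=
  Submodule.span K {z : g | ∃ x : g, z = ⁅x, x⁆}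

/-- Given a subspace `C`, the preimage of the center of `g/C`:
all `x` with `⁅x, y⁆ ∈ C` and `⁅y, x⁆ ∈ C` for every `y`. -/
def centerStep (C : Submodule K g) : Submodule K g where
  carrier := {x : g | ∀ y : g, ⁅x, y⁆ ∈ C ∧ ⁅y, x⁆ ∈ C}
  add_mem' := by
    intro a b ha hb
    intro y
    constructor
    · rw [LeibnizAlgebra.add_bracket]; exact C.add_mem (ha y).1 (hb y).1
    · rw [LeibnizAlgebra.bracket_add]; exact C.add_mem (ha y).2 (hb y).2
  zero_mem' := by
    intro y
    constructor
    · rw [zero_bracket K]; exact C.zero_mem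
    · rw [bracket_zero K]; exact C.zero_mem
  smul_mem' := by
    intro c a ha y
    constructor
    · rw [LeibnizAlgebra.smul_bracket]; exact C.smul_mem c (ha y).1
    · rw [LeibnizAlgebra.bracket_smul]; exact C.smul_mem c (ha y).2

/-- The transfinite upper central series of `g`: `ζ_0 = 0`,
`ζ_{α+1}/ζ_α = Z(g/ζ_α)`, and `ζ_ρ = ⋃_{α<ρ} ζ_α` at limit ordinals. -/
noncomputable def zeta : Ordinal.{0} → Submodule K g := fun o =>
  Ordinal.limitRecOn o ⊥ (fun _ C => centerStep K g C)
    (fun o _ ih => ⨆ (a : Ordinal.{0}) (h : a < o), ih a h)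

/-- `g` is hypercentral if `ζ_α(g) = g` for some ordinal `α`. -/
def Hypercentral : Prop := ∃ o : Ordinal.{0}, zeta K g o = ⊤

end Defs

section Quotient

variable {K : Type u} {g : Type v} [Field K] [AddCommGroup g] [Module K g] [LeibnizAlgebra K g]

/-- The bracket induced on the quotient `g ⧸ I` by a two-sided ideal `I`. -/
def quotBracket (I : Submodule K g) (hI : IsIdeal K g I) : g ⧸ I → g ⧸ I → g ⧸ I :=
  Quotient.map₂ (fun x y : g => ⁅x, y⁆) (by
    intro x x' hx y y' hy
    have hx' : x - x' ∈ I := (Submodule.quotientRel_def I).1 hx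
    have hy' : y - y' ∈ I := (Submodule.quotientRel_def I).1 hy
    refine (Submodule.quotientRel_def I).2 ?_
    have key : ⁅x, y⁆ - ⁅x', y'⁆ = ⁅x - x', y⁆ + ⁅x', y - y'⁆ := by
      rw [sub_bracket K, bracket_sub K]
      abel
    rw [key]
    exact I.add_mem (hI y (x - x') hx').2 (hI x' (y - y') hy').1)

@[simp] lemma quotBracket_mk (I : Submodule K g) (hI : IsIdeal K g I) (x y : g) :
    quotBracket I hI (Submodule.Quotient.mk x) (Submodule.Quotient.mk y) =
      Submodule.Quotient.mk ⁅x, y⁆ := rfl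

/-- The quotient Leibniz algebra `g ⧸ I` of `g` by a two-sided ideal `I`. -/
def quotLeibniz (I : Submodule K g) (hI : IsIdeal K g I) : LeibnizAlgebra K (g ⧸ I) where
  bracket := quotBracket I hI
  add_bracket X Y Z := by
    obtain ⟨x, rfl⟩ := Submodule.Quotient.mk_surjective I X
    obtain ⟨y, rfl⟩ := Submodule.Quotient.mk_surjective I Y
    obtain ⟨z, rfl⟩ := Submodule.Quotient.mk_surjective I Z
    show quotBracket I hI (Submodule.Quotient.mk x + Submodule.Quotient.mk y)
        (Submodule.Quotient.mk z) = _
    rw [← Submodule.Quotient.mk_add, quotBracket_mk]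
    show _ = quotBracket I hI (Submodule.Quotient.mk x) (Submodule.Quotient.mk z) +
      quotBracket I hI (Submodule.Quotient.mk y) (Submodule.Quotient.mk z)
    rw [quotBracket_mk, quotBracket_mk, ← Submodule.Quotient.mk_add,
      LeibnizAlgebra.add_bracket]
  bracket_add X Y Z := by
    obtain ⟨x, rfl⟩ := Submodule.Quotient.mk_surjective I X
    obtain ⟨y, rfl⟩ := Submodule.Quotient.mk_surjective I Y
    obtain ⟨z, rfl⟩ := Submodule.Quotient.mk_surjective I Z
    show quotBracket I hI (Submodule.Quotient.mk x)
        (Submodule.Quotient.mk y + Submodule.Quotient.mk z) = _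
    rw [← Submodule.Quotient.mk_add, quotBracket_mk]
    show _ = quotBracket I hI (Submodule.Quotient.mk x) (Submodule.Quotient.mk y) +
      quotBracket I hI (Submodule.Quotient.mk x) (Submodule.Quotient.mk z)
    rw [quotBracket_mk, quotBracket_mk, ← Submodule.Quotient.mk_add,
      LeibnizAlgebra.bracket_add]
  smul_bracket c X Y := by
    obtain ⟨x, rfl⟩ := Submodule.Quotient.mk_surjective I X
    obtain ⟨y, rfl⟩ := Submodule.Quotient.mk_surjective I Y
    show quotBracket I hI (c • Submodule.Quotient.mk x) (Submodule.Quotient.mk y) =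
      c • quotBracket I hI (Submodule.Quotient.mk x) (Submodule.Quotient.mk y)
    rw [← Submodule.Quotient.mk_smul, quotBracket_mk, quotBracket_mk,
      ← Submodule.Quotient.mk_smul, LeibnizAlgebra.smul_bracket]
  bracket_smul c X Y := by
    obtain ⟨x, rfl⟩ := Submodule.Quotient.mk_surjective I X
    obtain ⟨y, rfl⟩ := Submodule.Quotient.mk_surjective I Y
    show quotBracket I hI (Submodule.Quotient.mk x) (c • Submodule.Quotient.mk y) =
      c • quotBracket I hI (Submodule.Quotient.mk x) (Submodule.Quotient.mk y)
    rw [← Submodule.Quotient.mk_smul, quotBracket_mk, quotBracket_mk,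
      ← Submodule.Quotient.mk_smul, LeibnizAlgebra.bracket_smul]
  leibniz X Y Z := by
    obtain ⟨x, rfl⟩ := Submodule.Quotient.mk_surjective I X
    obtain ⟨y, rfl⟩ := Submodule.Quotient.mk_surjective I Y
    obtain ⟨z, rfl⟩ := Submodule.Quotient.mk_surjective I Z
    show quotBracket I hI (Submodule.Quotient.mk x)
        (quotBracket I hI (Submodule.Quotient.mk y) (Submodule.Quotient.mk z)) = _
    rw [quotBracket_mk, quotBracket_mk]
    show _ = quotBracket I hI
        (quotBracket I hI (Submodule.Quotient.mk x) (Submodule.Quotient.mk y))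
        (Submodule.Quotient.mk z) +
      quotBracket I hI (Submodule.Quotient.mk y)
        (quotBracket I hI (Submodule.Quotient.mk x) (Submodule.Quotient.mk z))
    rw [quotBracket_mk, quotBracket_mk, quotBracket_mk, quotBracket_mk,
      ← Submodule.Quotient.mk_add, LeibnizAlgebra.leibniz]

/-- A two-sided ideal of a Leibniz algebra, regarded as a Leibniz algebra itself. -/
def idealLeibniz (I : Submodule K g) (hI : IsIdeal K g I) : LeibnizAlgebra K I where
  bracket a b := ⟨⁅(a : g), (b : g)⁆, (hI (a : g) (b : g) b.2).1⟩
  add_bracket a b c := Subtype.ext (by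
    show ⁅((a + b : I) : g), (c : g)⁆ = ⁅(a : g), (c : g)⁆ + ⁅(b : g), (c : g)⁆
    rw [Submodule.coe_add, LeibnizAlgebra.add_bracket])
  bracket_add a b c := Subtype.ext (by
    show ⁅(a : g), ((b + c : I) : g)⁆ = ⁅(a : g), (b : g)⁆ + ⁅(a : g), (c : g)⁆
    rw [Submodule.coe_add, LeibnizAlgebra.bracket_add])
  smul_bracket c a b := Subtype.ext (by
    show ⁅((c • a : I) : g), (b : g)⁆ = c • ⁅(a : g), (b : g)⁆
    rw [Submodule.coe_smul, LeibnizAlgebra.smul_bracket])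
  bracket_smul c a b := Subtype.ext (by
    show ⁅(a : g), ((c • b : I) : g)⁆ = c • ⁅(a : g), (b : g)⁆
    rw [Submodule.coe_smul, LeibnizAlgebra.bracket_smul])
  leibniz a b c := Subtype.ext (by
    show ⁅(a : g), ⁅(b : g), (c : g)⁆⁆ =
      ⁅⁅(a : g), (b : g)⁆, (c : g)⁆ + ⁅(b : g), ⁅(a : g), (c : g)⁆⁆
    exact LeibnizAlgebra.leibniz (a : g) (b : g) (c : g))

end Quotient

section Constructions

variable {K : Type u} [Field K]

/-- The direct sum of two Leibniz algebras, with componentwise bracket. -/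
instance prodLeibniz (g₁ : Type v) (g₂ : Type v) [AddCommGroup g₁] [Module K g₁]
    [LeibnizAlgebra K g₁] [AddCommGroup g₂] [Module K g₂] [LeibnizAlgebra K g₂] :
    LeibnizAlgebra K (g₁ × g₂) where
  bracket x y := (⁅x.1, y.1⁆, ⁅x.2, y.2⁆)
  add_bracket x y z := Prod.ext_iff.2
    ⟨LeibnizAlgebra.add_bracket x.1 y.1 z.1, LeibnizAlgebra.add_bracket x.2 y.2 z.2⟩
  bracket_add x y z := Prod.ext_iff.2
    ⟨LeibnizAlgebra.bracket_add x.1 y.1 z.1, LeibnizAlgebra.bracket_add x.2 y.2 z.2⟩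
  smul_bracket c x y := Prod.ext_iff.2
    ⟨LeibnizAlgebra.smul_bracket c x.1 y.1, LeibnizAlgebra.smul_bracket c x.2 y.2⟩
  bracket_smul c x y := Prod.ext_iff.2
    ⟨LeibnizAlgebra.bracket_smul c x.1 y.1, LeibnizAlgebra.bracket_smul c x.2 y.2⟩
  leibniz x y z := Prod.ext_iff.2
    ⟨LeibnizAlgebra.leibniz x.1 y.1 z.1, LeibnizAlgebra.leibniz x.2 y.2 z.2⟩

/-- The direct sum of countably many copies of a Leibniz algebra `H`
(finitely supported sequences), with componentwise bracket. -/
noncomputable instance finsuppLeibniz (H : Type v) [AddCommGroup H] [Module K H]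
    [LeibnizAlgebra K H] : LeibnizAlgebra K (ℕ →₀ H) where
  bracket f h := Finsupp.zipWith (fun a b : H => ⁅a, b⁆) (zero_bracket K H 0) f h
  add_bracket f f' h := by
    ext i
    simp only [Finsupp.zipWith_apply, Finsupp.add_apply]
    exact LeibnizAlgebra.add_bracket (f i) (f' i) (h i)
  bracket_add f h h' := by
    ext i
    simp only [Finsupp.zipWith_apply, Finsupp.add_apply]
    exact LeibnizAlgebra.bracket_add (f i) (h i) (h' i)
  smul_bracket c f h := by
    ext i
    simp only [Finsupp.zipWith_apply, Finsupp.smul_apply]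
    exact LeibnizAlgebra.smul_bracket c (f i) (h i)
  bracket_smul c f h := by
    ext i
    simp only [Finsupp.zipWith_apply, Finsupp.smul_apply]
    exact LeibnizAlgebra.bracket_smul c (f i) (h i)
  leibniz f h k := by
    ext i
    simp only [Finsupp.zipWith_apply, Finsupp.add_apply]
    exact LeibnizAlgebra.leibniz (f i) (h i) (k i)

end Constructions

end Leibniz

open Leibniz

section Aux

variable {K : Type u} {g : Type v} [Field K] [AddCommGroup g] [Module K g] [LeibnizAlgebra K g]

lemma bk_le {A B S : Submodule K g} (h : ∀ a ∈ A, ∀ b ∈ B, ⁅a, b⁆ ∈ S) :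
    bk K g A B ≤ S := by
  apply Submodule.span_le.2
  rintro z ⟨a, ha, b, hb, rfl⟩
  exact h a ha b hb

lemma mem_bk {A B : Submodule K g} {a b : g} (ha : a ∈ A) (hb : b ∈ B) :
    ⁅a, b⁆ ∈ bk K g A B :=
  Submodule.subset_span ⟨a, ha, b, hb, rfl⟩

lemma bk_mono {A A' B B' : Submodule K g} (hA : A ≤ A') (hB : B ≤ B') :
    bk K g A B ≤ bk K g A' B' :=
  bk_le fun a ha b hb => mem_bk (hA ha) (hB hb)

lemma bk_le_of_ideal_right {X J : Submodule K g} (hJ : IsIdeal K g J) :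
    bk K g X J ≤ J :=
  bk_le fun a _ b hb => (hJ a b hb).1

lemma bk_le_of_ideal_left {X J : Submodule K g} (hJ : IsIdeal K g J) :
    bk K g J X ≤ J :=
  bk_le fun a ha b _ => (hJ b a ha).2

lemma isIdeal_top : IsIdeal K g (⊤ : Submodule K g) :=
  fun _ _ _ => ⟨Submodule.mem_top, Submodule.mem_top⟩

/-- The set of `z` such that both `⁅x,z⁆` and `⁅z,x⁆` lie in `S`, as a submodule. -/
def stab (x : g) (S : Submodule K g) : Submodule K g where
  carrier := {z : g | ⁅x, z⁆ ∈ S ∧ ⁅z, x⁆ ∈ S}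
  add_mem' := by
    rintro a b ⟨ha1, ha2⟩ ⟨hb1, hb2⟩
    constructor
    · rw [LeibnizAlgebra.bracket_add]; exact S.add_mem ha1 hb1
    · rw [LeibnizAlgebra.add_bracket]; exact S.add_mem ha2 hb2
  zero_mem' := by
    constructor
    · rw [bracket_zero K]; exact S.zero_mem
    · rw [zero_bracket K]; exact S.zero_mem
  smul_mem' := by
    rintro c a ⟨ha1, ha2⟩
    constructor
    · rw [LeibnizAlgebra.bracket_smul]; exact S.smul_mem c ha1
    · rw [LeibnizAlgebra.smul_bracket]; exact S.smul_mem c ha2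

lemma isIdeal_bk_self {A : Submodule K g} (hA : IsIdeal K g A) :
    IsIdeal K g (bk K g A A) := by
  intro x z hz
  have key : bk K g A A ≤ stab x (bk K g A A) := by
    apply bk_le
    intro a ha b hb
    constructor
    · -- ⁅x, ⁅a,b⁆⁆ = ⁅⁅x,a⁆,b⁆ + ⁅a,⁅x,b⁆⁆
      rw [LeibnizAlgebra.leibniz x a b]
      exact add_mem (mem_bk ((hA x a ha).1) hb) (mem_bk ha ((hA x b hb).1))
    · -- ⁅⁅a,b⁆,x⁆ = ⁅a,⁅b,x⁆⁆ - ⁅b,⁅a,x⁆⁆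
      have h := LeibnizAlgebra.leibniz (K := K) a b x
      have h2 : ⁅(⁅a,b⁆ : g), x⁆ = ⁅a, ⁅b, x⁆⁆ - ⁅b, ⁅a, x⁆⁆ := by
        rw [h]; abel
      rw [h2]
      exact sub_mem (mem_bk ha ((hA x b hb).2)) (mem_bk hb ((hA x a ha).2))
  exact key hz

lemma derived_succ (n : ℕ) :
    derived K g (n + 1) = bk K g (derived K g n) (derived K g n) := rfl

lemma isIdeal_derived (n : ℕ) : IsIdeal K g (derived K g n) := by
  induction n with
  | zero => exact isIdeal_top
  | succ n ih => rw [derived_succ]; exact isIdeal_bk_self ih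

lemma derived_succ_le (n : ℕ) : derived K g (n + 1) ≤ derived K g n := by
  rw [derived_succ]
  exact bk_le_of_ideal_right (isIdeal_derived n)

lemma derived_antitone {m n : ℕ} (h : m ≤ n) : derived K g n ≤ derived K g m := by
  induction n with
  | zero => simpa [Nat.le_zero.1 h] using le_rfl
  | succ n ih =>
    rcases Nat.lt_or_ge m (n+1) with h' | h'
    · exact le_trans (derived_succ_le n) (ih (Nat.lt_succ_iff.1 h'))
    · have : m = n+1 := le_antisymm h h'
      simpa [this] using le_rfl

lemma chain_antitone {J : ℕ → Submodule K g} (hd : ∀ n, J (n + 1) ≤ J n)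
    {m n : ℕ} (h : m ≤ n) : J n ≤ J m := by
  induction n with
  | zero => simpa [Nat.le_zero.1 h] using le_rfl
  | succ n ih =>
    rcases Nat.lt_or_ge m (n+1) with h' | h'
    · exact le_trans (hd n) (ih (Nat.lt_succ_iff.1 h'))
    · have : m = n+1 := le_antisymm h h'
      simpa [this] using le_rfl

lemma map_derived_le {I : Submodule K g} (hI : IsIdeal K g I) (n : ℕ) :
    Submodule.map I.mkQ (derived K g n) ≤
      @derived K (g ⧸ I) _ _ _ (quotLeibniz I hI) n := by
  letI := quotLeibniz I hI
  induction n with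
  | zero => exact le_top
  | succ n ih =>
    rw [derived_succ, derived_succ]
    rw [bk, Submodule.map_span]
    apply Submodule.span_le.2
    rintro z ⟨w, ⟨a, ha, b, hb, rfl⟩, rfl⟩
    have hz : I.mkQ ⁅a, b⁆ =
        ⁅(Submodule.Quotient.mk a : g ⧸ I), (Submodule.Quotient.mk b : g ⧸ I)⁆ := by
      rw [Submodule.mkQ_apply]
      exact (quotBracket_mk I hI a b).symm
    rw [hz]
    exact mem_bk (ih ⟨a, ha, rfl⟩) (ih ⟨b, hb, rfl⟩)

lemma derived_le_of_solvable_quot {I : Submodule K g} (hI : IsIdeal K g I)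
    (h : @IsSolvable K (g ⧸ I) _ _ _ (quotLeibniz I hI)) :
    ∃ k : ℕ, derived K g k ≤ I := by
  obtain ⟨k, hk⟩ := h
  refine ⟨k, fun x hx => ?_⟩
  have hmem : I.mkQ x ∈ (⊥ : Submodule K (g ⧸ I)) := by
    rw [← hk]
    exact map_derived_le hI k ⟨x, hx, rfl⟩
  rw [Submodule.mem_bot, Submodule.mkQ_apply] at hmem
  exact (Submodule.Quotient.mk_eq_zero I).1 hmem

end Aux
section Aux2

variable {K : Type u} {g : Type v} [Field K] [AddCommGroup g] [Module K g] [LeibnizAlgebra K g]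

/-- `{z | ⁅y, z⁆ ∈ S}` as a submodule. -/
def rightStab (y : g) (S : Submodule K g) : Submodule K g where
  carrier := {z : g | ⁅y, z⁆ ∈ S}
  add_mem' := by
    intro a b ha hb
    show ⁅y, a + b⁆ ∈ S
    rw [LeibnizAlgebra.bracket_add]
    exact S.add_mem ha hb
  zero_mem' := by
    show ⁅y, (0 : g)⁆ ∈ S
    rw [bracket_zero K]
    exact S.zero_mem
  smul_mem' := by
    intro c a ha
    show ⁅y, c • a⁆ ∈ S
    rw [LeibnizAlgebra.bracket_smul]
    exact S.smul_mem c ha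

@[simp] lemma mem_rightStab {y z : g} {S : Submodule K g} :
    z ∈ rightStab y S ↔ ⁅y, z⁆ ∈ S := Iff.rfl

/-- `{z | ⁅z, y⁆ ∈ S}` as a submodule. -/
def leftStab (y : g) (S : Submodule K g) : Submodule K g where
  carrier := {z : g | ⁅z, y⁆ ∈ S}
  add_mem' := by
    intro a b ha hb
    show ⁅a + b, y⁆ ∈ S
    rw [LeibnizAlgebra.add_bracket]
    exact S.add_mem ha hb
  zero_mem' := by
    show ⁅(0 : g), y⁆ ∈ S
    rw [zero_bracket K]
    exact S.zero_mem
  smul_mem' := by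
    intro c a ha
    show ⁅c • a, y⁆ ∈ S
    rw [LeibnizAlgebra.smul_bracket]
    exact S.smul_mem c ha

@[simp] lemma mem_leftStab {y z : g} {S : Submodule K g} :
    z ∈ leftStab y S ↔ ⁅z, y⁆ ∈ S := Iff.rfl

lemma gbk_mem {A B : Submodule K g} (hA : IsIdeal K g A) (hB : IsIdeal K g B) {y z : g}
    (hz : z ∈ bk K g A B) : ⁅y, z⁆ ∈ bk K g A B := by
  have h : bk K g A B ≤ rightStab y (bk K g A B) := by
    apply bk_le
    intro a ha b hb
    rw [mem_rightStab, LeibnizAlgebra.leibniz (K := K) y a b]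
    exact add_mem (mem_bk (hA y a ha).1 hb) (mem_bk ha (hB y b hb).1)
  exact h hz

lemma isIdeal_bot : IsIdeal K g (⊥ : Submodule K g) := by
  intro x a ha
  rw [Submodule.mem_bot] at ha
  subst ha
  constructor
  · rw [bracket_zero K]; exact Submodule.zero_mem _
  · rw [zero_bracket K]; exact Submodule.zero_mem _

lemma isIdeal_sup {A B : Submodule K g} (hA : IsIdeal K g A) (hB : IsIdeal K g B) :
    IsIdeal K g (A ⊔ B) := by
  intro x z hz
  obtain ⟨u, hu, v, hv, rfl⟩ := Submodule.mem_sup.1 hz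
  constructor
  · rw [LeibnizAlgebra.bracket_add]
    exact add_mem (Submodule.mem_sup_left (hA x u hu).1) (Submodule.mem_sup_right (hB x v hv).1)
  · rw [LeibnizAlgebra.add_bracket]
    exact add_mem (Submodule.mem_sup_left (hA x u hu).2) (Submodule.mem_sup_right (hB x v hv).2)

lemma bk_sup_left {A B X : Submodule K g} :
    bk K g (A ⊔ B) X ≤ bk K g A X ⊔ bk K g B X := by
  apply bk_le
  intro a ha x hx
  obtain ⟨u, hu, v, hv, rfl⟩ := Submodule.mem_sup.1 ha
  rw [LeibnizAlgebra.add_bracket]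
  exact add_mem (Submodule.mem_sup_left (mem_bk hu hx)) (Submodule.mem_sup_right (mem_bk hv hx))

lemma bk_sup_right {A B X : Submodule K g} :
    bk K g X (A ⊔ B) ≤ bk K g X A ⊔ bk K g X B := by
  apply bk_le
  intro x hx a ha
  obtain ⟨u, hu, v, hv, rfl⟩ := Submodule.mem_sup.1 ha
  rw [LeibnizAlgebra.bracket_add]
  exact add_mem (Submodule.mem_sup_left (mem_bk hx hu)) (Submodule.mem_sup_right (mem_bk hx hv))

variable (K g) in
/-- The smallest two-sided ideal containing `x`. -/
def idealSpan (x : g) : Submodule K g := sInf {W : Submodule K g | IsIdeal K g W ∧ x ∈ W}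

variable (K g) in
lemma mem_idealSpan_self (x : g) : x ∈ idealSpan K g x :=
  Submodule.mem_sInf.2 fun _ hW => hW.2

variable (K g) in
lemma isIdeal_idealSpan (x : g) : IsIdeal K g (idealSpan K g x) := by
  intro y a ha
  constructor
  · exact Submodule.mem_sInf.2 fun W hW => (hW.1 y a (Submodule.mem_sInf.1 ha W hW)).1
  · exact Submodule.mem_sInf.2 fun W hW => (hW.1 y a (Submodule.mem_sInf.1 ha W hW)).2

lemma idealSpan_le {x : g} {W : Submodule K g} (hW : IsIdeal K g W) (hx : x ∈ W) :
    idealSpan K g x ≤ W :=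
  sInf_le ⟨hW, hx⟩

variable (K g) in
/-- The largest ideal `{x | ⁅idealSpan K g x, P⁆ ≤ T}`. -/
def omegaR (P T : Submodule K g) : Submodule K g where
  carrier := {x : g | bk K g (idealSpan K g x) P ≤ T}
  add_mem' := by
    intro x y hx hy
    show bk K g (idealSpan K g (x + y)) P ≤ T
    have h1 : idealSpan K g (x + y) ≤ idealSpan K g x ⊔ idealSpan K g y :=
      idealSpan_le (isIdeal_sup (isIdeal_idealSpan K g x) (isIdeal_idealSpan K g y))
        (add_mem (Submodule.mem_sup_left (mem_idealSpan_self K g x))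
          (Submodule.mem_sup_right (mem_idealSpan_self K g y)))
    exact le_trans (bk_mono h1 le_rfl) (le_trans bk_sup_left (sup_le hx hy))
  zero_mem' := by
    show bk K g (idealSpan K g 0) P ≤ T
    have h1 : idealSpan K g (0 : g) ≤ ⊥ := idealSpan_le isIdeal_bot (Submodule.zero_mem _)
    apply bk_le
    intro a ha b _
    have : a = 0 := Submodule.mem_bot K |>.1 (h1 ha)
    subst this
    rw [zero_bracket K]
    exact T.zero_mem
  smul_mem' := by
    intro c x hx
    show bk K g (idealSpan K g (c • x)) P ≤ T
    have h1 : idealSpan K g (c • x) ≤ idealSpan K g x :=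
      idealSpan_le (isIdeal_idealSpan K g x) (Submodule.smul_mem _ c (mem_idealSpan_self K g x))
    exact le_trans (bk_mono h1 le_rfl) hx

@[simp] lemma mem_omegaR {P T : Submodule K g} {x : g} :
    x ∈ omegaR K g P T ↔ bk K g (idealSpan K g x) P ≤ T := Iff.rfl

lemma isIdeal_omegaR {P T : Submodule K g} : IsIdeal K g (omegaR K g P T) := by
  intro y w hw
  constructor
  · rw [mem_omegaR]
    have h : idealSpan K g ⁅y, w⁆ ≤ idealSpan K g w :=
      idealSpan_le (isIdeal_idealSpan K g w) ((isIdeal_idealSpan K g w) y w (mem_idealSpan_self K g w)).1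
    exact le_trans (bk_mono h le_rfl) hw
  · rw [mem_omegaR]
    have h : idealSpan K g ⁅w, y⁆ ≤ idealSpan K g w :=
      idealSpan_le (isIdeal_idealSpan K g w) ((isIdeal_idealSpan K g w) y w (mem_idealSpan_self K g w)).2
    exact le_trans (bk_mono h le_rfl) hw

variable (K g) in
/-- The largest ideal `{x | ⁅P, idealSpan K g x⁆ ≤ T}`. -/
def omegaL (P T : Submodule K g) : Submodule K g where
  carrier := {x : g | bk K g P (idealSpan K g x) ≤ T}
  add_mem' := by
    intro x y hx hy
    show bk K g P (idealSpan K g (x + y)) ≤ T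
    have h1 : idealSpan K g (x + y) ≤ idealSpan K g x ⊔ idealSpan K g y :=
      idealSpan_le (isIdeal_sup (isIdeal_idealSpan K g x) (isIdeal_idealSpan K g y))
        (add_mem (Submodule.mem_sup_left (mem_idealSpan_self K g x))
          (Submodule.mem_sup_right (mem_idealSpan_self K g y)))
    exact le_trans (bk_mono le_rfl h1) (le_trans bk_sup_right (sup_le hx hy))
  zero_mem' := by
    show bk K g P (idealSpan K g 0) ≤ T
    have h1 : idealSpan K g (0 : g) ≤ ⊥ := idealSpan_le isIdeal_bot (Submodule.zero_mem _)
    apply bk_le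
    intro a _ b hb
    have : b = 0 := Submodule.mem_bot K |>.1 (h1 hb)
    subst this
    rw [bracket_zero K]
    exact T.zero_mem
  smul_mem' := by
    intro c x hx
    show bk K g P (idealSpan K g (c • x)) ≤ T
    have h1 : idealSpan K g (c • x) ≤ idealSpan K g x :=
      idealSpan_le (isIdeal_idealSpan K g x) (Submodule.smul_mem _ c (mem_idealSpan_self K g x))
    exact le_trans (bk_mono le_rfl h1) hx

@[simp] lemma mem_omegaL {P T : Submodule K g} {x : g} :
    x ∈ omegaL K g P T ↔ bk K g P (idealSpan K g x) ≤ T := Iff.rfl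

lemma isIdeal_omegaL {P T : Submodule K g} : IsIdeal K g (omegaL K g P T) := by
  intro y w hw
  constructor
  · rw [mem_omegaL]
    have h : idealSpan K g ⁅y, w⁆ ≤ idealSpan K g w :=
      idealSpan_le (isIdeal_idealSpan K g w) ((isIdeal_idealSpan K g w) y w (mem_idealSpan_self K g w)).1
    exact le_trans (bk_mono le_rfl h) hw
  · rw [mem_omegaL]
    have h : idealSpan K g ⁅w, y⁆ ≤ idealSpan K g w :=
      idealSpan_le (isIdeal_idealSpan K g w) ((isIdeal_idealSpan K g w) y w (mem_idealSpan_self K g w)).2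
    exact le_trans (bk_mono le_rfl h) hw

/-- `⁅u,v⁆ + ⁅v,u⁆` is a combination of squares, hence lies in `Leib(g)`. -/
lemma sum_bracket_mem_leib (u v : g) : ⁅u, v⁆ + ⁅v, u⁆ ∈ leibIdeal K g := by
  have h : ⁅u, v⁆ + ⁅v, u⁆ = ⁅u + v, u + v⁆ - ⁅u, u⁆ - ⁅v, v⁆ := by
    rw [LeibnizAlgebra.add_bracket, LeibnizAlgebra.bracket_add, LeibnizAlgebra.bracket_add]
    abel
  rw [h]
  exact sub_mem (sub_mem (Submodule.subset_span ⟨u + v, rfl⟩)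
    (Submodule.subset_span ⟨u, rfl⟩)) (Submodule.subset_span ⟨v, rfl⟩)

/-- Elements of `Leib(g)` annihilate on the left. -/
lemma leib_bracket_eq_zero {z : g} (hz : z ∈ leibIdeal K g) (y : g) : ⁅z, y⁆ = 0 := by
  have h : leibIdeal K g ≤ leftStab y (⊥ : Submodule K g) := by
    apply Submodule.span_le.2
    rintro w ⟨x, rfl⟩
    rw [SetLike.mem_coe, mem_leftStab, Submodule.mem_bot]
    have hl := LeibnizAlgebra.leibniz (K := K) x x y
    exact right_eq_add.1 hl
  exact Submodule.mem_bot K |>.1 (h hz)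

/-- `Leib(g)` is stable under left multiplication. -/
lemma bracket_leib_mem {z : g} (hz : z ∈ leibIdeal K g) (y : g) : ⁅y, z⁆ ∈ leibIdeal K g := by
  have h : leibIdeal K g ≤ rightStab y (leibIdeal K g) := by
    apply Submodule.span_le.2
    rintro w ⟨x, rfl⟩
    rw [SetLike.mem_coe, mem_rightStab, LeibnizAlgebra.leibniz (K := K) y x x]
    exact sum_bracket_mem_leib ⁅y, x⁆ x
  exact h hz

lemma le_map_derived {I : Submodule K g} (hI : IsIdeal K g I) (n : ℕ) :
    @derived K (g ⧸ I) _ _ _ (quotLeibniz I hI) n ≤ Submodule.map I.mkQ (derived K g n) := by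
  letI := quotLeibniz I hI
  induction n with
  | zero =>
    intro x _
    obtain ⟨y, rfl⟩ := Submodule.Quotient.mk_surjective I x
    exact ⟨y, Submodule.mem_top, by rw [Submodule.mkQ_apply]⟩
  | succ n ih =>
    rw [derived_succ, derived_succ]
    refine le_trans (bk_mono ih ih) ?_
    apply bk_le
    intro a ha b hb
    obtain ⟨a', ha', rfl⟩ := Submodule.mem_map.1 ha
    obtain ⟨b', hb', rfl⟩ := Submodule.mem_map.1 hb
    refine ⟨⁅a', b'⁆, mem_bk ha' hb', ?_⟩
    rw [Submodule.mkQ_apply, Submodule.mkQ_apply, Submodule.mkQ_apply]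
    exact (quotBracket_mk I hI a' b').symm

end Aux2
/-- A Leibniz algebra is quasi-Artinian iff there is a two-sided ideal `I` with `g/I`
solvable and both sets of ideals `{[H,I] : H ◁ g}` and `{[I,H] : H ◁ g}` satisfy the
minimal condition. -/
theorem quasiArtinian_iff (K : Type u) (g : Type v) [Field K] [AddCommGroup g] [Module K g]
    [LeibnizAlgebra K g] :
    QuasiArtinian K g ↔
      ∃ (I : Submodule K g) (hI : IsIdeal K g I),
        (@IsSolvable K (g ⧸ I) _ _ _ (quotLeibniz I hI)) ∧
        (∀ C : ℕ → Submodule K g,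
          (∀ n, ∃ H : Submodule K g, IsIdeal K g H ∧ C n = bk K g H I) →
          (∀ n, C (n + 1) ≤ C n) →
          ∃ m : ℕ, ∀ n : ℕ, m ≤ n → C n = C m) ∧
        (∀ C : ℕ → Submodule K g,
          (∀ n, ∃ H : Submodule K g, IsIdeal K g H ∧ C n = bk K g I H) →
          (∀ n, C (n + 1) ≤ C n) →
          ∃ m : ℕ, ∀ n : ℕ, m ≤ n → C n = C m) := by
  constructor
  · -- forward direction
    intro hQA
    obtain ⟨m₀, hm₀⟩ := hQA (derived K g) (fun n => isIdeal_derived n) (fun n => derived_succ_le n)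
    have hm₀' : ∀ n, derived K g (m₀ + 1) ≤ derived K g n := by
      intro n
      have h := (hm₀ n).1
      rwa [← derived_succ] at h
    set D := derived K g (m₀ + 1) with hDdef
    have hDid : IsIdeal K g D := isIdeal_derived _
    have hDperf : bk K g D D = D := by
      apply le_antisymm (bk_le_of_ideal_right hDid)
      have h2 := hm₀' (m₀ + 1 + 1)
      rwa [derived_succ (m₀ + 1)] at h2
    refine ⟨D, hDid, ?_, ?_, ?_⟩
    · -- the quotient is solvable
      exact ⟨m₀ + 1, le_bot_iff.1 (le_trans (le_map_derived hDid (m₀ + 1)) (by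
        rintro z hz
        obtain ⟨x, hx, rfl⟩ := Submodule.mem_map.1 hz
        rw [Submodule.mem_bot, Submodule.mkQ_apply]
        exact (Submodule.Quotient.mk_eq_zero D).2 hx))⟩
    · -- minimal condition on the family {⁅H, D⁆}
      intro C hCrep hCdesc
      choose H hHid hCH using hCrep
      have hCle : ∀ n, bk K g (omegaR K g D (C n)) D ≤ C n := by
        intro n
        apply bk_le
        intro w hw b hb
        exact (mem_omegaR.1 hw) (mem_bk (mem_idealSpan_self K g w) hb)
      have hHsub : ∀ n, H n ≤ omegaR K g D (C n) := by
        intro n x hx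
        rw [mem_omegaR]
        exact le_trans (bk_mono (idealSpan_le (hHid n) hx) le_rfl) (hCH n).ge
      have hCsub : ∀ n, C n ≤ bk K g (omegaR K g D (C n)) D := fun n =>
        (hCH n).le.trans (bk_mono (hHsub n) le_rfl)
      have hOmdesc : ∀ n, omegaR K g D (C (n + 1)) ≤ omegaR K g D (C n) :=
        fun n x hx => le_trans hx (hCdesc n)
      obtain ⟨m₁, hm₁⟩ := hQA (fun n => omegaR K g D (C n))
        (fun _ => isIdeal_omegaR) hOmdesc
      have hSid : ∀ n, IsIdeal K g (bk K g (omegaR K g D (C n)) D ⊓ leibIdeal K g) := by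
        intro n y σ hσ
        obtain ⟨hσ1, hσ2⟩ := Submodule.mem_inf.1 hσ
        constructor
        · exact Submodule.mem_inf.2 ⟨gbk_mem isIdeal_omegaR hDid hσ1, bracket_leib_mem hσ2 y⟩
        · rw [leib_bracket_eq_zero hσ2 y]
          exact Submodule.zero_mem _
      have hSdesc : ∀ n, bk K g (omegaR K g D (C (n + 1))) D ⊓ leibIdeal K g ≤
          bk K g (omegaR K g D (C n)) D ⊓ leibIdeal K g :=
        fun n => inf_le_inf (bk_mono (hOmdesc n) le_rfl) le_rfl
      obtain ⟨m₂, hm₂⟩ := hQA (fun n => bk K g (omegaR K g D (C n)) D ⊓ leibIdeal K g)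
        hSid hSdesc
      -- common index m for both chains
      refine ⟨max m₁ m₂, fun n hn => ?_⟩
      set m := max m₁ m₂ with hmdef
      have hω : ∀ k, bk K g (derived K g m) (omegaR K g D (C m)) ≤ omegaR K g D (C k)
          ∧ bk K g (omegaR K g D (C m)) (derived K g m) ≤ omegaR K g D (C k) := by
        intro k
        constructor
        · exact le_trans (bk_mono (derived_antitone (le_max_left m₁ m₂))
            (chain_antitone (J := fun n => omegaR K g D (C n)) hOmdesc (le_max_left m₁ m₂))) (hm₁ k).1
        · exact le_trans (bk_mono (chain_antitone (J := fun n => omegaR K g D (C n)) hOmdesc (le_max_left m₁ m₂))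
            (derived_antitone (le_max_left m₁ m₂))) (hm₁ k).2
      have hσQA : ∀ k, bk K g (derived K g m) (bk K g (omegaR K g D (C m)) D ⊓ leibIdeal K g) ≤
          bk K g (omegaR K g D (C k)) D ⊓ leibIdeal K g := by
        intro k
        exact le_trans (bk_mono (derived_antitone (le_max_right m₁ m₂))
          (inf_le_inf (bk_mono (chain_antitone (J := fun n => omegaR K g D (C n)) hOmdesc (le_max_right m₁ m₂)) le_rfl) le_rfl))
          (hm₂ k).1
      have hDm : D ≤ derived K g m := hm₀' m
      have hBΩ : ∀ k, bk K g (omegaR K g D (C m)) D ≤ omegaR K g D (C k) := fun k =>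
        le_trans (bk_mono le_rfl hDm) (hω k).2
      have hBI : ∀ k, bk K g (bk K g (omegaR K g D (C m)) D) D ≤ C k := fun k =>
        le_trans (bk_mono (hBΩ k) le_rfl) (hCle k)
      have hgC : ∀ k (y z : g), z ∈ C k → ⁅y, z⁆ ∈ C k := by
        intro k y z hz
        rw [hCH k] at hz ⊢
        exact gbk_mem (hHid k) hDid hz
      -- s-values lie in the Leibniz part of the m-th term
      have hsS : ∀ a ∈ D, ∀ c ∈ bk K g (omegaR K g D (C m)) D,
          ⁅a, c⁆ + ⁅c, a⁆ ∈ bk K g (omegaR K g D (C m)) D ⊓ leibIdeal K g := by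
        intro a ha c hc
        refine Submodule.mem_inf.2 ⟨?_, sum_bracket_mem_leib a c⟩
        exact add_mem (gbk_mem isIdeal_omegaR hDid hc)
          ((bk_mono (hBΩ m) le_rfl) (mem_bk hc ha))
      -- Step A : regeneration of B
      have hA : bk K g (omegaR K g D (C m)) D ≤
          bk K g (bk K g (omegaR K g D (C m)) D) D ⊔
            bk K g D (bk K g (omegaR K g D (C m)) D) := by
        have h0 : bk K g (omegaR K g D (C m)) D =
            bk K g (omegaR K g D (C m)) (bk K g D D) := by rw [hDperf]
        conv_lhs => rw [h0]
        apply bk_le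
        intro p hp z hz
        have hstep : bk K g D D ≤ rightStab p
            (bk K g (bk K g (omegaR K g D (C m)) D) D ⊔
              bk K g D (bk K g (omegaR K g D (C m)) D)) := by
          apply bk_le
          intro a ha b hb
          rw [mem_rightStab, LeibnizAlgebra.leibniz (K := K) p a b]
          exact add_mem (Submodule.mem_sup_left (mem_bk (mem_bk hp ha) hb))
            (Submodule.mem_sup_right (mem_bk ha (mem_bk hp hb)))
        exact hstep hz
      -- Step C : B ≤ C k ⊔ S m
      have hdag : ∀ k, bk K g (omegaR K g D (C m)) D ≤
          C k ⊔ (bk K g (omegaR K g D (C m)) D ⊓ leibIdeal K g) := by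
        intro k
        refine le_trans hA (sup_le (le_trans (hBI k) le_sup_left) ?_)
        apply bk_le
        intro a ha c hc
        have h1 : ⁅c, a⁆ ∈ C k := hBI k (mem_bk hc ha)
        have h2 := hsS a ha c hc
        have h3 : ⁅a, c⁆ = (⁅a, c⁆ + ⁅c, a⁆) - ⁅c, a⁆ := by abel
        rw [h3]
        exact sub_mem (Submodule.mem_sup_right h2) (Submodule.mem_sup_left h1)
      -- Step E : ⁅D, B⁆ ≤ C k
      have hE : ∀ k, bk K g D (bk K g (omegaR K g D (C m)) D) ≤ C k := by
        intro k
        apply bk_le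
        intro a ha c hc
        obtain ⟨w, hw, σ, hσ, hwσ⟩ := Submodule.mem_sup.1 (hdag k hc)
        rw [← hwσ, LeibnizAlgebra.bracket_add]
        refine add_mem (hgC k a w hw) ?_
        have h4 : ⁅a, σ⁆ ∈ bk K g (omegaR K g D (C k)) D ⊓ leibIdeal K g :=
          hσQA k (mem_bk (hDm ha) hσ)
        exact le_trans inf_le_left (hCle k) h4
      -- conclusion
      refine le_antisymm (chain_antitone hCdesc hn) ?_
      exact le_trans (hCsub m) (le_trans hA (sup_le (hBI n) (hE n)))
    · -- minimal condition on the family {⁅D, H⁆}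
      intro C hCrep hCdesc
      choose H hHid hCH using hCrep
      have hCle : ∀ n, bk K g D (omegaL K g D (C n)) ≤ C n := by
        intro n
        apply bk_le
        intro b hb w hw
        exact (mem_omegaL.1 hw) (mem_bk hb (mem_idealSpan_self K g w))
      have hHsub : ∀ n, H n ≤ omegaL K g D (C n) := by
        intro n x hx
        rw [mem_omegaL]
        exact le_trans (bk_mono le_rfl (idealSpan_le (hHid n) hx)) (hCH n).ge
      have hCsub : ∀ n, C n ≤ bk K g D (omegaL K g D (C n)) := fun n =>
        (hCH n).le.trans (bk_mono le_rfl (hHsub n))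
      have hOmdesc : ∀ n, omegaL K g D (C (n + 1)) ≤ omegaL K g D (C n) :=
        fun n x hx => le_trans hx (hCdesc n)
      obtain ⟨m₁, hm₁⟩ := hQA (fun n => omegaL K g D (C n))
        (fun _ => isIdeal_omegaL) hOmdesc
      have hDm : D ≤ derived K g m₁ := hm₀' m₁
      have hBΩ : ∀ k, bk K g D (omegaL K g D (C m₁)) ≤ omegaL K g D (C k) := fun k =>
        le_trans (bk_mono hDm le_rfl) (hm₁ k).1
      have hpur : bk K g D (omegaL K g D (C m₁)) ≤
          bk K g D (bk K g D (omegaL K g D (C m₁))) := by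
        have h0 : bk K g D (omegaL K g D (C m₁)) =
            bk K g (bk K g D D) (omegaL K g D (C m₁)) := by rw [hDperf]
        conv_lhs => rw [h0]
        apply bk_le
        intro z hz w hw
        have hstep : bk K g D D ≤ leftStab w
            (bk K g D (bk K g D (omegaL K g D (C m₁)))) := by
          apply bk_le
          intro a ha b hb
          rw [mem_leftStab]
          have hlid : ⁅(⁅a, b⁆ : g), w⁆ = ⁅a, ⁅b, w⁆⁆ - ⁅b, ⁅a, w⁆⁆ := by
            rw [LeibnizAlgebra.leibniz (K := K) a b w]
            abel
          rw [hlid]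
          exact sub_mem (mem_bk ha (mem_bk hb hw)) (mem_bk hb (mem_bk ha hw))
        exact hstep hz
      refine ⟨m₁, fun n hn => le_antisymm (chain_antitone hCdesc hn) ?_⟩
      exact le_trans (hCsub m₁) (le_trans hpur
        (le_trans (bk_mono le_rfl (hBΩ n)) (hCle n)))
  · rintro ⟨I, hI, hsolv, min1, min2⟩
    intro J hJid hJdesc
    obtain ⟨k, hkI⟩ := derived_le_of_solvable_quot hI hsolv
    obtain ⟨m₁, h₁⟩ := min1 (fun n => bk K g (J n) I)
      (fun n => ⟨J n, hJid n, rfl⟩) (fun n => bk_mono (hJdesc n) le_rfl)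
    obtain ⟨m₂, h₂⟩ := min2 (fun n => bk K g I (J n))
      (fun n => ⟨J n, hJid n, rfl⟩) (fun n => bk_mono le_rfl (hJdesc n))
    have h₁' : ∀ n, m₁ ≤ n → bk K g (J n) I = bk K g (J m₁) I := h₁
    have h₂' : ∀ n, m₂ ≤ n → bk K g I (J n) = bk K g I (J m₂) := h₂
    refine ⟨max k (max m₁ m₂), fun n => ?_⟩
    set m := max k (max m₁ m₂) with hm
    have hDI : derived K g m ≤ I := le_trans (derived_antitone (le_max_left _ _)) hkI
    constructor
    · have hle : bk K g (derived K g m) (J m) ≤ bk K g I (J m) := bk_mono hDI le_rfl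
      rcases le_total n m with hnm | hmn
      · exact le_trans hle (le_trans (bk_le_of_ideal_right (hJid m))
          (chain_antitone hJdesc hnm))
      · have hm2 : m₂ ≤ m := le_trans (le_max_right _ _) (le_max_right _ _)
        have e1 : bk K g I (J m) = bk K g I (J m₂) := h₂' m hm2
        have e2 : bk K g I (J n) = bk K g I (J m₂) := h₂' n (le_trans hm2 hmn)
        refine le_trans hle ?_
        rw [e1, ← e2]
        exact bk_le_of_ideal_right (hJid n)
    · have hle : bk K g (J m) (derived K g m) ≤ bk K g (J m) I := bk_mono le_rfl hDI
      rcases le_total n m with hnm | hmn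
      · exact le_trans hle (le_trans (bk_le_of_ideal_left (hJid m))
          (chain_antitone hJdesc hnm))
      · have hm1 : m₁ ≤ m := le_trans (le_max_left _ _) (le_max_right _ _)
        have e1 : bk K g (J m) I = bk K g (J m₁) I := h₁' m hm1
        have e2 : bk K g (J n) I = bk K g (J m₁) I := h₁' n (le_trans hm1 hmn)
        refine le_trans hle ?_
        rw [e1, ← e2]
        exact bk_le_of_ideal_left (hJid n)
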